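/- arXiv:2506.14033 — 4 statements merged into one kernel-verified Lean document; each statement's English description precedes it below -/
import Mathlib

section
/- Let X be a compact finite-dimensional smooth real manifold without boundary, let T be a vector field on X (an assignment x ↦ T(x) ∈ T_x X), let N ∈ ℕ and let λ₁, …, λ_N be positive real numbers. For 1 ≤ j, ℓ ≤ N let f_{j,ℓ} : X → ℂ be smooth functions satisfying the eigenfunction equation (df_{j,ℓ})_x(T(x)) = i·λ_j·f_{j,ℓ}(x) for all x ∈ X, where (df_{j,ℓ})_x denotes the differential (mfderiv) of f_{j,ℓ} at x. Suppose φ : X → ℝ is a function (with no regularity assumed) such that Σ_{j=1}^N e^{2λ_j φ(x)} · Σ_{ℓ=1}^N |f_{j,ℓ}(x)|² = 1 for all x ∈ X. Then φ is smooth (C^∞) and Tφ ≡ 0, i.e. (dφ)_x(T(x)) = 0 for all x ∈ X. -/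
/-!
Put `g_j = ∑_ℓ |f_{j,ℓ}|²` and `G(s, t) = ∑_j e^{2λ_j t} s_j`, so that `G(g(x), φ(x)) = 1`.
Since `g(x) ≥ 0` is nonzero, `∂_t G > 0` there; hence `φ(x)` is the unique root and, by the
implicit function theorem, `φ` is smooth. The eigenfunction equation gives
`T|f|² = 2 Re(conj f · iλ f) = 0`, so `Tg = 0`, and differentiating `G(g, φ) = 1` along `T`
leaves `∂_t G · Tφ = 0`.
-/

open scoped Manifold Topology RealInnerProductSpace
open Filter

section NormedSpaceTarget

variable {𝕜 : Type*} [NontriviallyNormedField 𝕜]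
  {E : Type*} [NormedAddCommGroup E] [NormedSpace 𝕜 E]
  {H : Type*} [TopologicalSpace H] {I : ModelWithCorners 𝕜 E H}
  {M : Type*} [TopologicalSpace M] [ChartedSpace H M] {x : M}

theorem HasMFDerivAt.prodMk_space {F G : Type*} [NormedAddCommGroup F] [NormedSpace 𝕜 F]
    [NormedAddCommGroup G] [NormedSpace 𝕜 G] {f : M → F} {g : M → G}
    {f' : TangentSpace I x →L[𝕜] F} {g' : TangentSpace I x →L[𝕜] G}
    (hf : HasMFDerivAt I 𝓘(𝕜, F) f x f') (hg : HasMFDerivAt I 𝓘(𝕜, G) g x g') :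
    HasMFDerivAt I 𝓘(𝕜, F × G) (fun y ↦ (f y, g y)) x (f'.prod g') :=
  ⟨hf.1.prodMk hg.1, hf.2.prodMk hg.2⟩

theorem hasMFDerivAt_pi_space {ι : Type*} [Fintype ι] {F : ι → Type*}
    [∀ i, NormedAddCommGroup (F i)] [∀ i, NormedSpace 𝕜 (F i)] {f : M → (i : ι) → F i}
    {f' : TangentSpace I x →L[𝕜] ((i : ι) → F i)} :
    HasMFDerivAt I 𝓘(𝕜, (i : ι) → F i) f x f' ↔
      ∀ i, HasMFDerivAt I 𝓘(𝕜, F i) (f · i) x ((ContinuousLinearMap.proj i).comp f') := by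
  simp only [HasMFDerivAt, continuousAt_pi, forall_and]
  exact and_congr Iff.rfl hasFDerivWithinAt_pi'

end NormedSpaceTarget

theorem Complex.inner_self_I_mul_ofReal_mul (z : ℂ) (c : ℝ) : ⟪z, I * c * z⟫ = 0 := by
  simp [Complex.inner, mul_assoc, Complex.mul_conj, ← Complex.ofReal_mul]

section InnerProductSpaceTarget

variable {E : Type*} [NormedAddCommGroup E] [NormedSpace ℝ E]
  {H : Type*} [TopologicalSpace H] {I : ModelWithCorners ℝ E H}
  {M : Type*} [TopologicalSpace M] [ChartedSpace H M] {x : M}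
  {F : Type*} [NormedAddCommGroup F] [InnerProductSpace ℝ F]

theorem HasMFDerivAt.norm_sq {f : M → F} {f' : TangentSpace I x →L[ℝ] F}
    (hf : HasMFDerivAt I 𝓘(ℝ, F) f x f') :
    HasMFDerivAt I 𝓘(ℝ, ℝ) (‖f ·‖ ^ 2) x (2 • (innerSL ℝ (f x)).comp f') :=
  (hasStrictFDerivAt_norm_sq (f x)).hasFDerivAt.hasMFDerivAt.comp x hf

theorem HasMFDerivAt.sum_norm_sq {ι : Type} (s : Finset ι) {f : ι → M → F}
    {f' : ι → TangentSpace I x →L[ℝ] F} (hf : ∀ i ∈ s, HasMFDerivAt I 𝓘(ℝ, F) (f i) x (f' i)) :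
    HasMFDerivAt I 𝓘(ℝ, ℝ) (fun y ↦ ∑ i ∈ s, ‖f i y‖ ^ 2) x
      (∑ i ∈ s, 2 • (innerSL ℝ (f i x)).comp (f' i)) := by
  rw [← Finset.sum_fn s fun i y ↦ ‖f i y‖ ^ 2]
  exact HasMFDerivAt.sum fun i hi ↦ (hf i hi).norm_sq

theorem mfderiv_sum_norm_sq_apply_eq_zero {ι : Type} {s : Finset ι} {f : ι → M → ℂ} {c : ι → ℝ}
    {v : TangentSpace I x} (hf : ∀ i ∈ s, MDifferentiableAt I 𝓘(ℝ, ℂ) (f i) x)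
    (hv : ∀ i ∈ s, mfderiv I 𝓘(ℝ, ℂ) (f i) x v = Complex.I * (c i : ℂ) * f i x) :
    mfderiv I 𝓘(ℝ, ℝ) (fun y ↦ ∑ i ∈ s, ‖f i y‖ ^ 2) x v = 0 := by
  rw [(HasMFDerivAt.sum_norm_sq s fun i hi ↦ (hf i hi).hasMFDerivAt).mfderiv,
    FunLike.coe_sum, Finset.sum_apply]
  refine Finset.sum_eq_zero fun i hi ↦ ?_
  change 2 • ⟪f i x, mfderiv I 𝓘(ℝ, ℂ) (f i) x v⟫ = 0
  rw [hv i hi, Complex.inner_self_I_mul_ofReal_mul, smul_zero]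

end InnerProductSpaceTarget

theorem ContinuousLinearMap.isInvertible_of_apply_one_ne_zero {𝕜 : Type*} [Field 𝕜]
    [TopologicalSpace 𝕜] [IsTopologicalRing 𝕜] {L : 𝕜 →L[𝕜] 𝕜} (h : L 1 ≠ 0) : L.IsInvertible :=
  ⟨ContinuousLinearEquiv.unitsEquivAut 𝕜 (Units.mk0 _ h), by ext; simp⟩

section ImplicitEquation

variable {𝕜 : Type*} [NontriviallyNormedField 𝕜]
  {E : Type*} [NormedAddCommGroup E] [NormedSpace 𝕜 E]
  {H : Type*} [TopologicalSpace H] {I : ModelWithCorners 𝕜 E H}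
  {M : Type*} [TopologicalSpace M] [ChartedSpace H M]
  {F : Type*} [NormedAddCommGroup F] [NormedSpace 𝕜 F]
  {G : F × 𝕜 → 𝕜} {g : M → F} {φ : M → 𝕜} {c d : 𝕜} {x : M}

theorem DifferentiableAt.fderiv_apply_zero_one {p : F × 𝕜} (hG : DifferentiableAt 𝕜 G p)
    (hGt : HasDerivAt (fun t ↦ G (p.1, t)) d p.2) : fderiv 𝕜 G p (0, 1) = d :=
  (hG.hasFDerivAt.comp_hasDerivAt p.2 ((hasDerivAt_const _ _).prodMk (hasDerivAt_id _))).unique hGt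

theorem mfderiv_apply_eq_zero_of_implicit {g' : TangentSpace I x →L[𝕜] F}
    (hg : HasMFDerivAt I 𝓘(𝕜, F) g x g') (hφ : MDifferentiableAt I 𝓘(𝕜, 𝕜) φ x)
    (hG : DifferentiableAt 𝕜 G (g x, φ x)) (hGt : HasDerivAt (fun t ↦ G (g x, t)) d (φ x))
    (hd : d ≠ 0) (hGc : ∀ᶠ y in 𝓝 x, G (g y, φ y) = c) {v : TangentSpace I x} (hv : g' v = 0) :
    mfderiv I 𝓘(𝕜, 𝕜) φ x v = 0 := by
  have hcomp := hG.hasFDerivAt.hasMFDerivAt.comp x (hg.prodMk_space hφ.hasMFDerivAt)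
  have hzero : (fderiv 𝕜 G (g x, φ x)).comp (g'.prod (mfderiv I 𝓘(𝕜, 𝕜) φ x)) = 0 :=
    (hcomp.congr_of_eventuallyEq (hGc.mono fun _ h ↦ h.symm)).mfderiv.symm.trans mfderiv_const
  set τ : 𝕜 := mfderiv I 𝓘(𝕜, 𝕜) φ x v
  have hτ : fderiv 𝕜 G (g x, φ x) (g' v, τ) = τ * d := by
    rw [hv, show ((0 : F), τ) = τ • ((0 : F), (1 : 𝕜)) by simp, map_smul,
      hG.fderiv_apply_zero_one hGt, smul_eq_mul]
  have hτ0 : τ * d = 0 := hτ ▸ congr($hzero v)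
  exact (mul_eq_zero.mp hτ0).resolve_right hd

end ImplicitEquation

section ImplicitFunction

variable {𝕜 : Type*} [RCLike 𝕜]
  {E : Type*} [NormedAddCommGroup E] [NormedSpace 𝕜 E]
  {H : Type*} [TopologicalSpace H] {I : ModelWithCorners 𝕜 E H}
  {M : Type*} [TopologicalSpace M] [ChartedSpace H M]
  {F : Type*} [NormedAddCommGroup F] [NormedSpace 𝕜 F] [CompleteSpace F]
  {G : F × 𝕜 → 𝕜} {g : M → F} {φ : M → 𝕜} {c d : 𝕜} {x : M} {n : WithTop ℕ∞}

theorem contMDiffAt_of_implicit (hn : n ≠ 0) (hg : ContMDiffAt I 𝓘(𝕜, F) n g x)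
    (hG : ContDiffAt 𝕜 n G (g x, φ x)) (hGt : HasDerivAt (fun t ↦ G (g x, t)) d (φ x))
    (hd : d ≠ 0) (hinj : ∀ᶠ y in 𝓝 x, Function.Injective fun t ↦ G (g y, t))
    (hGc : ∀ᶠ y in 𝓝 x, G (g y, φ y) = c) : ContMDiffAt I 𝓘(𝕜, 𝕜) n φ x := by
  have hinv : (fderiv 𝕜 G (g x, φ x) ∘L .inr 𝕜 F 𝕜).IsInvertible :=
    ContinuousLinearMap.isInvertible_of_apply_one_ne_zero <| by
      simpa [(hG.differentiableAt hn).fderiv_apply_zero_one hGt] using hd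
  set ψ := hG.implicitFunction hn hinv
  have hψ : ∀ᶠ y in 𝓝 x, G (g y, ψ (g y)) = G (g x, φ x) :=
    hg.continuousAt.eventually (hG.eventually_apply_implicitFunction hn hinv)
  have hφψ : φ =ᶠ[𝓝 x] ψ ∘ g := by
    filter_upwards [hψ, hinj, hGc] with y hyψ hyinj hyc
    exact hyinj (hyc.trans (hyψ.trans hGc.self_of_nhds).symm)
  have hψ_smooth : ContDiffAt 𝕜 n ψ (g x) := hG.contDiffAt_implicitFunction hn hinv
  exact (hψ_smooth.comp_contMDiffAt hg).congr_of_eventuallyEq hφψ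

end ImplicitFunction

section ExpSum

variable {ι : Type*} [Fintype ι] {a s : ι → ℝ}

noncomputable def expSum (a : ι → ℝ) (p : (ι → ℝ) × ℝ) : ℝ :=
  ∑ j, Real.exp (a j * p.2) * p.1 j

theorem contDiff_expSum (a : ι → ℝ) {n : WithTop ℕ∞} : ContDiff ℝ n (expSum a) := by
  unfold expSum
  fun_prop

theorem hasDerivAt_expSum (a s : ι → ℝ) (t : ℝ) :
    HasDerivAt (fun t ↦ expSum a (s, t)) (∑ j, a j * Real.exp (a j * t) * s j) t := by
  refine HasDerivAt.fun_sum fun j _ ↦ ?_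
  have h := (((hasDerivAt_id t).const_mul (a j)).exp).mul_const (s j)
  exact h.congr_deriv (by simp only [id, mul_one]; ring)

theorem sum_mul_exp_mul_pos (ha : ∀ j, 0 < a j) (hs : 0 ≤ s) (hs₀ : s ≠ 0) (t : ℝ) :
    0 < ∑ j, a j * Real.exp (a j * t) * s j := by
  obtain ⟨j, hj⟩ := Function.ne_iff.mp hs₀
  have hj' : 0 < s j := lt_of_le_of_ne (hs j) (Ne.symm hj)
  exact Finset.sum_pos' (fun i _ ↦ mul_nonneg (mul_pos (ha i) (Real.exp_pos _)).le (hs i))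
    ⟨j, Finset.mem_univ j, mul_pos (mul_pos (ha j) (Real.exp_pos _)) hj'⟩

theorem strictMono_expSum (ha : ∀ j, 0 < a j) (hs : 0 ≤ s) (hs₀ : s ≠ 0) :
    StrictMono fun t ↦ expSum a (s, t) :=
  strictMono_of_deriv_pos fun t ↦
    (hasDerivAt_expSum a s t).deriv ▸ sum_mul_exp_mul_pos ha hs hs₀ t

end ExpSum

theorem stmt6_general
    {E : Type*} [NormedAddCommGroup E] [NormedSpace ℝ E]
    {Hm : Type*} [TopologicalSpace Hm] (I : ModelWithCorners ℝ E Hm)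
    {X : Type*} [TopologicalSpace X] [ChartedSpace Hm X]
    (T : (x : X) → TangentSpace I x)
    (N : ℕ) (lam : Fin N → ℝ) (hlam : ∀ j, 0 < lam j)
    (f : Fin N → Fin N → X → ℂ)
    (hf : ∀ j l, ContMDiff I 𝓘(ℝ, ℂ) (⊤ : ℕ∞) (f j l))
    (heig : ∀ j l (x : X),
      mfderiv I 𝓘(ℝ, ℂ) (f j l) x (T x) = Complex.I * (lam j : ℂ) * f j l x)
    (φ : X → ℝ)
    (hφ : ∀ x : X,
      ∑ j, Real.exp (2 * lam j * φ x) * ∑ l, ‖f j l x‖ ^ 2 = 1) :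
    ContMDiff I 𝓘(ℝ, ℝ) (⊤ : ℕ∞) φ ∧
      ∀ x : X, mfderiv I 𝓘(ℝ, ℝ) φ x (T x) = 0 := by
  set a : Fin N → ℝ := fun j ↦ 2 * lam j
  set g : X → Fin N → ℝ := fun x j ↦ ∑ l, ‖f j l x‖ ^ 2
  have ha : ∀ j, 0 < a j := fun j ↦ mul_pos two_pos (hlam j)
  have hG : ∀ x, expSum a (g x, φ x) = 1 := hφ
  have hg_nonneg : ∀ x, 0 ≤ g x := fun x j ↦ by positivity
  have hg_ne : ∀ x, g x ≠ 0 := fun x h ↦ by simpa [expSum, h] using hG x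
  have hderiv_ne : ∀ x, (∑ j, a j * Real.exp (a j * φ x) * g x j) ≠ 0 := fun x ↦
    (sum_mul_exp_mul_pos ha (hg_nonneg x) (hg_ne x) (φ x)).ne'
  have hgj : ∀ j, ContMDiff I 𝓘(ℝ, ℝ) (⊤ : ℕ∞) (g · j) := fun j ↦
    contMDiff_finsetSum fun l _ ↦ (contDiff_norm_sq ℝ).comp_contMDiff (hf j l)
  have hφ_smooth : ContMDiff I 𝓘(ℝ, ℝ) (⊤ : ℕ∞) φ := fun x ↦
    contMDiffAt_of_implicit (by simp) (contMDiff_pi_space.2 hgj x) (contDiff_expSum a).contDiffAt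
      (hasDerivAt_expSum a (g x) (φ x)) (hderiv_ne x)
      (.of_forall fun y ↦ (strictMono_expSum ha (hg_nonneg y) (hg_ne y)).injective)
      (.of_forall hG)
  refine ⟨hφ_smooth, fun x ↦ ?_⟩
  have hg' : HasMFDerivAt I 𝓘(ℝ, Fin N → ℝ) g x (.pi fun j ↦ mfderiv I 𝓘(ℝ, ℝ) (g · j) x) :=
    hasMFDerivAt_pi_space.2 fun j ↦ ((hgj j x).mdifferentiableAt (by simp)).hasMFDerivAt
  refine mfderiv_apply_eq_zero_of_implicit hg'
    ((hφ_smooth x).mdifferentiableAt (by simp))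
    ((contDiff_expSum a (n := 1)).differentiable one_ne_zero _)
    (hasDerivAt_expSum a (g x) (φ x)) (hderiv_ne x) (.of_forall hG) ?_
  ext j
  exact mfderiv_sum_norm_sq_apply_eq_zero (fun l _ ↦ (hf j l x).mdifferentiableAt (by simp))
    fun l _ ↦ heig j l x

/-- On a compact smooth manifold `X` without boundary with a vector field
`T`, if smooth functions `f_{j,ℓ} : X → ℂ` satisfy `T f_{j,ℓ} = i λ_j f_{j,ℓ}` with
`λ_j > 0`, and a function `φ : X → ℝ` (with no regularity assumed) satisfies
`Σ_j e^{2λ_j φ} Σ_ℓ |f_{j,ℓ}|² = 1`, then `φ` is smooth and `Tφ ≡ 0`. -/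
theorem stmt6
    {E : Type*} [NormedAddCommGroup E] [NormedSpace ℝ E] [FiniteDimensional ℝ E]
    {Hm : Type*} [TopologicalSpace Hm] (I : ModelWithCorners ℝ E Hm) [I.Boundaryless]
    {X : Type*} [TopologicalSpace X] [ChartedSpace Hm X]
    [IsManifold I (⊤ : ℕ∞) X] [CompactSpace X]
    (T : (x : X) → TangentSpace I x)
    (N : ℕ) (lam : Fin N → ℝ) (hlam : ∀ j, 0 < lam j)
    (f : Fin N → Fin N → X → ℂ)
    (hf : ∀ j l, ContMDiff I 𝓘(ℝ, ℂ) (⊤ : ℕ∞) (f j l))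
    (heig : ∀ j l (x : X),
      mfderiv I 𝓘(ℝ, ℂ) (f j l) x (T x) = Complex.I * (lam j : ℂ) * f j l x)
    (φ : X → ℝ)
    (hφ : ∀ x : X,
      ∑ j, Real.exp (2 * lam j * φ x) * ∑ l, ‖f j l x‖ ^ 2 = 1) :
    ContMDiff I 𝓘(ℝ, ℝ) (⊤ : ℕ∞) φ ∧
      ∀ x : X, mfderiv I 𝓘(ℝ, ℝ) φ x (T x) = 0 :=
  stmt6_general I T N lam hlam f hf heig φ hφ
end

section
/- Let X be a compact topological space, let N ∈ ℕ, let λ₁, …, λ_N be positive real numbers, and let V₁, …, V_N be finite-dimensional ℂ-linear subspaces of the space C(X,ℂ) of continuous complex-valued functions on X. Let C > 0, let φ : X → ℝ be a function, and let (φ_k)_{k∈ℕ} be a sequence of functions φ_k : X → ℝ such that |φ_k(x)| ≤ C for all k ∈ ℕ and x ∈ X, and φ_k(x) → φ(x) as k → ∞ for every x ∈ X. Suppose that for each k ∈ ℕ there exist functions f^{(k)}_{j,ℓ} ∈ V_j (1 ≤ j, ℓ ≤ N) with Σ_{j=1}^N e^{2λ_j φ_k(x)} · Σ_{ℓ=1}^N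 |f^{(k)}_{j,ℓ}(x)|² = 1 for all x ∈ X. Then there exist functions f_{j,ℓ} ∈ V_j (1 ≤ j, ℓ ≤ N) with Σ_{j=1}^N e^{2λ_j φ(x)} · Σ_{ℓ=1}^N |f_{j,ℓ}(x)|² = 1 for all x ∈ X. -/
open Filter

set_option synthInstance.maxHeartbeats 1000000
set_option maxHeartbeats 1000000

/-- Let `X` be a compact topological space, `λ_j > 0`, and
`V_j ⊆ C(X,ℂ)` finite-dimensional subspaces. If `φ_k → φ` pointwise with `|φ_k| ≤ C`,
and for each `k` there are `f^{(k)}_{j,ℓ} ∈ V_j` with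
`Σ_j e^{2λ_j φ_k} Σ_ℓ |f^{(k)}_{j,ℓ}|² = 1` on `X`, then there are `f_{j,ℓ} ∈ V_j` with
`Σ_j e^{2λ_j φ} Σ_ℓ |f_{j,ℓ}|² = 1` on `X`. -/
theorem stmt7 {X : Type*} [TopologicalSpace X] [CompactSpace X]
    (N : ℕ) (lam : Fin N → ℝ) (hlam : ∀ j, 0 < lam j)
    (V : Fin N → Submodule ℂ C(X, ℂ)) (hV : ∀ j, FiniteDimensional ℂ (V j))
    (C : ℝ) (hC : 0 < C)
    (φ : X → ℝ) (φseq : ℕ → X → ℝ)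
    (hbd : ∀ k x, |φseq k x| ≤ C)
    (hconv : ∀ x, Tendsto (fun k => φseq k x) atTop (nhds (φ x)))
    (F : ℕ → Fin N → Fin N → C(X, ℂ))
    (hF : ∀ k j l, F k j l ∈ V j)
    (hsum : ∀ k x, ∑ j, Real.exp (2 * lam j * φseq k x) * ∑ l, ‖F k j l x‖ ^ 2 = 1) :
    ∃ f : Fin N → Fin N → C(X, ℂ), (∀ j l, f j l ∈ V j) ∧
      ∀ x, ∑ j, Real.exp (2 * lam j * φ x) * ∑ l, ‖f j l x‖ ^ 2 = 1 := by
  classical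
  set S : ℝ := ∑ j, lam j with hS
  have hSle : ∀ j : Fin N, lam j ≤ S :=
    fun j => Finset.single_le_sum (fun i _ => (hlam i).le) (Finset.mem_univ j)
  set R : ℝ := Real.exp (S * C) with hR
  have hRpos : 0 < R := Real.exp_pos _
  -- pointwise bound
  have hFbd : ∀ k (j l : Fin N) (x : X), ‖F k j l x‖ ≤ R := by
    intro k j l x
    have hterm : Real.exp (2 * lam j * φseq k x) * ‖F k j l x‖ ^ 2 ≤ 1 := by
      rw [← hsum k x]
      have h1 : ‖F k j l x‖ ^ 2 ≤ ∑ l', ‖F k j l' x‖ ^ 2 :=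
        Finset.single_le_sum (f := fun l' => ‖F k j l' x‖ ^ 2) (fun i _ => sq_nonneg _) (Finset.mem_univ l)
      calc Real.exp (2 * lam j * φseq k x) * ‖F k j l x‖ ^ 2
          ≤ Real.exp (2 * lam j * φseq k x) * ∑ l', ‖F k j l' x‖ ^ 2 :=
            mul_le_mul_of_nonneg_left h1 (Real.exp_pos _).le
        _ ≤ ∑ j', Real.exp (2 * lam j' * φseq k x) * ∑ l', ‖F k j' l' x‖ ^ 2 :=
            Finset.single_le_sum
              (f := fun j' => Real.exp (2 * lam j' * φseq k x) * ∑ l', ‖F k j' l' x‖ ^ 2)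
              (fun i _ => mul_nonneg (Real.exp_pos _).le
              (Finset.sum_nonneg fun _ _ => sq_nonneg _)) (Finset.mem_univ j)
    have hle : Real.exp (-(2 * lam j * C)) ≤ Real.exp (2 * lam j * φseq k x) := by
      apply Real.exp_le_exp.2
      have := abs_le.1 (hbd k x)
      nlinarith [hlam j, this.1, this.2]
    have e1 : Real.exp (-(2 * lam j * C)) * ‖F k j l x‖ ^ 2 ≤ 1 :=
      le_trans (mul_le_mul_of_nonneg_right hle (sq_nonneg _)) hterm
    have e2 : Real.exp (-(2 * lam j * C)) * Real.exp (2 * lam j * C) = 1 := by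
      rw [← Real.exp_add]; simp
    have h2 : ‖F k j l x‖ ^ 2 ≤ Real.exp (2 * lam j * C) := by
      nlinarith [Real.exp_pos (-(2 * lam j * C))]
    have h3 : Real.exp (2 * lam j * C) ≤ R ^ 2 := by
      have : R ^ 2 = Real.exp (2 * (S * C)) := by
        rw [hR, ← Real.exp_nat_mul]; push_cast; ring_nf
      rw [this]
      apply Real.exp_le_exp.2
      nlinarith [hSle j, hC, hlam j]
    have h6 : ‖F k j l x‖ ^ 2 ≤ R ^ 2 := h2.trans h3
    nlinarith [norm_nonneg (F k j l x), hRpos, h6]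
  -- package into a finite-dimensional space
  haveI : ∀ j, FiniteDimensional ℂ (V j) := hV
  set P := (j : Fin N) → Fin N → V j with hP
  let g : ℕ → P := fun k j l => ⟨F k j l, hF k j l⟩
  have hgbd : ∀ k, g k ∈ Metric.closedBall (0 : P) R := by
    intro k
    rw [Metric.mem_closedBall, dist_zero_right]
    refine (pi_norm_le_iff_of_nonneg hRpos.le).2 fun j => ?_
    refine (pi_norm_le_iff_of_nonneg hRpos.le).2 fun l => ?_
    show ‖F k j l‖ ≤ R
    exact (ContinuousMap.norm_le _ hRpos.le).2 fun x => hFbd k j l x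
  have hcpt : IsCompact (Metric.closedBall (0 : P) R) := isCompact_closedBall _ _
  obtain ⟨f0, -, ψ, hψ, hψt⟩ := hcpt.tendsto_subseq hgbd
  refine ⟨fun j l => (f0 j l : C(X, ℂ)), fun j l => (f0 j l).2, fun x => ?_⟩
  -- pointwise convergence of each ingredient
  have hφ : Tendsto (fun k => φseq (ψ k) x) atTop (nhds (φ x)) :=
    (hconv x).comp hψ.tendsto_atTop
  have hFx : ∀ j l : Fin N,
      Tendsto (fun k => F (ψ k) j l x) atTop (nhds ((f0 j l : C(X, ℂ)) x)) := by
    intro j l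
    have h1 : Tendsto (fun k => (g (ψ k)) j l) atTop (nhds (f0 j l)) :=
      tendsto_pi_nhds.1 ((tendsto_pi_nhds.1 hψt) j) l
    have h2 : Tendsto (fun k => ((g (ψ k)) j l : C(X, ℂ))) atTop
        (nhds ((f0 j l : C(X, ℂ)))) :=
      (continuous_subtype_val.tendsto _).comp h1
    exact ((continuous_eval_const x).tendsto _).comp h2
  have hA : Tendsto
      (fun k => ∑ j, Real.exp (2 * lam j * φseq (ψ k) x) * ∑ l, ‖F (ψ k) j l x‖ ^ 2)
      atTop
      (nhds (∑ j, Real.exp (2 * lam j * φ x) * ∑ l, ‖(f0 j l : C(X, ℂ)) x‖ ^ 2)) := by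
    refine tendsto_finset_sum _ fun j _ => Tendsto.mul ?_ ?_
    · exact (Real.continuous_exp.tendsto _).comp (hφ.const_mul (2 * lam j))
    · exact tendsto_finset_sum _ fun l _ => ((hFx j l).norm).pow 2
  have hB : Tendsto
      (fun k => ∑ j, Real.exp (2 * lam j * φseq (ψ k) x) * ∑ l, ‖F (ψ k) j l x‖ ^ 2)
      atTop (nhds 1) := by
    simp only [fun k => hsum (ψ k) x]
    exact tendsto_const_nhds
  exact tendsto_nhds_unique hA hB
end

section
/- With the notation of the context, let A₁, B₁, A₂, B₂ be positive constants with A₁ < 1 < B₁. Assume A₁ ≤ Σ_{j=1}^N a_j ≤ B₁, and assume that 1 − A₂/k ≤ Σ_{j=1}^{M_k} b_j^{(k)} ≤ 1 + B₂/k for all k ≥ 1. Then there exist constants C > 0 and k₀ > 0 such that for every k ≥ k₀ and every s ∈ ℝ with g_k(s) = 1 one has |s| ≤ C·k^{-2}. -/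
set_option maxHeartbeats 1600000


/-- With `g_k(s) = e^{-2k} Σ_j a_j e^{μ_j s} + Σ_j b_j^{(k)} e^{ν_j^{(k)} s}`
as in the context, if `A₁ ≤ Σ a_j ≤ B₁` with `0 < A₁ < 1 < B₁` and
`1 − A₂/k ≤ Σ_j b_j^{(k)} ≤ 1 + B₂/k` for all `k ≥ 1`, then there are `C > 0`, `k₀ > 0`
such that for every `k ≥ k₀` and every `s` with `g_k(s) = 1` one has `|s| ≤ C k⁻²`. -/
theorem stmt10 (δ₁ δ₂ : ℝ) (hδ₁ : 0 < δ₁) (hδ : δ₁ < δ₂) (hδ₂ : δ₂ < 1)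
    (N : ℕ) (a : Fin N → ℝ) (ha : ∀ j, 0 ≤ a j)
    (μ : Fin N → ℝ) (hμ : ∀ j, 0 < μ j)
    (M : ℝ → ℕ)
    (b : (k : ℝ) → Fin (M k) → ℝ) (hb : ∀ k : ℝ, 1 ≤ k → ∀ j, 0 ≤ b k j)
    (ν : (k : ℝ) → Fin (M k) → ℝ)
    (hν : ∀ k : ℝ, 1 ≤ k → ∀ j, ν k j ∈ Set.Icc (2 * δ₁ * k) (2 * δ₂ * k))
    (g : (k : ℝ) → ℝ → ℝ)
    (hg : ∀ k s, g k s = Real.exp (-2 * k) * ∑ j, a j * Real.exp (μ j * s)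
        + ∑ j, b k j * Real.exp (ν k j * s))
    (A₁ B₁ A₂ B₂ : ℝ) (hA₁ : 0 < A₁) (hA₂ : 0 < A₂) (hB₂ : 0 < B₂)
    (hA₁1 : A₁ < 1) (hB₁1 : 1 < B₁)
    (hsuma : A₁ ≤ ∑ j, a j ∧ ∑ j, a j ≤ B₁)
    (hsumb : ∀ k : ℝ, 1 ≤ k → 1 - A₂ / k ≤ ∑ j, b k j ∧ ∑ j, b k j ≤ 1 + B₂ / k) :
    ∃ C > (0:ℝ), ∃ k₀ > (0:ℝ), ∀ k ≥ k₀, ∀ s : ℝ, g k s = 1 → |s| ≤ C / k ^ 2 := by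
  obtain ⟨ha1, ha2⟩ := hsuma
  have hB₁0 : (0:ℝ) < B₁ := lt_trans one_pos hB₁1
  refine ⟨(A₂ + B₂ + 1)/δ₁, by positivity, 2*A₂ + 2*B₁ + B₂ + 1, by positivity, ?_⟩
  intro k hk s hgs
  have hk1 : (1:ℝ) ≤ k := by nlinarith
  have hk0 : (0:ℝ) < k := by linarith
  have hk2A₂ : 2*A₂ ≤ k := by nlinarith
  have hk2B₁ : 2*B₁ ≤ k := by nlinarith
  have hkB₂ : B₂ + 1 ≤ k := by nlinarith
  obtain ⟨hb1, hb2⟩ := hsumb k hk1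
  rw [hg] at hgs
  have hC0 : (0:ℝ) ≤ (A₂+B₂+1)/δ₁/k^2 := by positivity
  set E := Real.exp (2*δ₁*k*s) with hE
  have hE0 : (0:ℝ) < E := Real.exp_pos _
  have hk2pos : (0:ℝ) < k^2 := by positivity
  rcases le_or_gt s 0 with hs | hs
  · -- s ≤ 0 : need lower bound
    refine abs_le.mpr ⟨?_, le_trans hs hC0⟩
    have h1 : ∑ j, b k j * Real.exp (ν k j * s) ≤ (∑ j, b k j) * E := by
      rw [Finset.sum_mul]
      refine Finset.sum_le_sum fun j _ => ?_
      exact mul_le_mul_of_nonneg_left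
        (Real.exp_le_exp.mpr (mul_le_mul_of_nonpos_right (hν k hk1 j).1 hs)) (hb k hk1 j)
    have h2 : ∑ j, a j * Real.exp (μ j * s) ≤ B₁ := by
      refine le_trans (Finset.sum_le_sum fun j _ => ?_) (le_trans ha2 le_rfl)
      have hμs : μ j * s ≤ 0 := mul_nonpos_of_nonneg_of_nonpos (hμ j).le hs
      calc a j * Real.exp (μ j * s) ≤ a j * 1 :=
            mul_le_mul_of_nonneg_left (Real.exp_le_one_iff.mpr hμs) (ha j)
        _ = a j := mul_one _
    have he2k : (0:ℝ) < Real.exp (-2*k) := Real.exp_pos _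
    -- key inequality, multiplied by k
    have hb2k : (∑ j, b k j) * k ≤ k + B₂ := by
      have h := mul_le_mul_of_nonneg_right hb2 hk0.le
      have : (1 + B₂/k) * k = k + B₂ := by field_simp <;> ring
      linarith [this ▸ h]
    have F1 : k ≤ Real.exp (-2*k) * B₁ * k + (k + B₂) * E := by
      have hterm : Real.exp (-2*k) * ∑ j, a j * Real.exp (μ j * s)
          ≤ Real.exp (-2*k) * B₁ := mul_le_mul_of_nonneg_left h2 he2k.le
      have hkey : 1 ≤ Real.exp (-2*k) * B₁ + (∑ j, b k j) * E := by linarith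
      nlinarith [mul_le_mul_of_nonneg_right hkey hk0.le,
        mul_le_mul_of_nonneg_right hb2k hE0.le]
    have hD0 : (0:ℝ) < k + B₂ + 1 := by linarith
    have F2 : B₁ * Real.exp (-2*k) * (k + B₂ + 1) ≤ 1 := by
      have hek : 1 + k ≤ Real.exp k := by linarith [Real.add_one_le_exp k]
      have h2k : Real.exp (-2*k) * (Real.exp k * Real.exp k) = 1 := by
        rw [← Real.exp_add, ← Real.exp_add, show -2*k + (k + k) = 0 by ring, Real.exp_zero]
      have hbig : B₁ * (k + B₂ + 1) ≤ Real.exp k * Real.exp k := by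
        nlinarith [mul_le_mul hek hek (by linarith) (by positivity : (0:ℝ) ≤ Real.exp k),
          mul_nonneg hB₁0.le (by linarith : (0:ℝ) ≤ k - (B₂ + 1)),
          mul_le_mul_of_nonneg_right hk2B₁ hk0.le]
      nlinarith [mul_le_mul_of_nonneg_left hbig he2k.le]
    have hED : k ≤ E * (k + B₂ + 1) := by
      have t1 := mul_le_mul_of_nonneg_right F1 hD0.le
      have t2 := mul_le_mul_of_nonneg_right F2 hk0.le
      have hq : k * (k + B₂) ≤ (E * (k + B₂ + 1)) * (k + B₂) := by nlinarith
      exact le_of_mul_le_mul_right hq (by linarith)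
    have hxD : Real.exp (-((B₂+1)/k)) * (k + B₂ + 1) ≤ k := by
      have h1' : k + (B₂+1) ≤ k * Real.exp ((B₂+1)/k) := by
        have h := mul_le_mul_of_nonneg_left (Real.add_one_le_exp ((B₂+1)/k)) hk0.le
        have heq : k * ((B₂+1)/k + 1) = k + (B₂+1) := by field_simp <;> ring
        linarith [heq ▸ h]
      have hm : Real.exp (-((B₂+1)/k)) * Real.exp ((B₂+1)/k) = 1 := by
        rw [← Real.exp_add, show -((B₂+1)/k) + (B₂+1)/k = 0 by ring, Real.exp_zero]
      nlinarith [mul_le_mul_of_nonneg_left h1' (Real.exp_pos (-((B₂+1)/k))).le]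
    have hxE : Real.exp (-((B₂+1)/k)) ≤ E := by
      refine le_of_mul_le_mul_right ?_ hD0
      linarith
    have hlog : -((B₂+1)/k) ≤ 2*δ₁*k*s := Real.exp_le_exp.mp hxE
    have hmul : -(B₂+1) ≤ 2*δ₁*k*s*k := by
      have h := mul_le_mul_of_nonneg_right hlog hk0.le
      have heq : -((B₂+1)/k) * k = -(B₂+1) := by field_simp <;> ring
      linarith [heq ▸ h]
    rw [neg_le, le_div_iff₀ hk2pos, le_div_iff₀ hδ₁]
    nlinarith
  · -- s > 0 : need upper bound
    refine abs_le.mpr ⟨by linarith, ?_⟩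
    have h1 : (∑ j, b k j) * E ≤ ∑ j, b k j * Real.exp (ν k j * s) := by
      rw [Finset.sum_mul]
      refine Finset.sum_le_sum fun j _ => ?_
      exact mul_le_mul_of_nonneg_left
        (Real.exp_le_exp.mpr (mul_le_mul_of_nonneg_right (hν k hk1 j).1 hs.le)) (hb k hk1 j)
    have h0 : 0 ≤ Real.exp (-2*k) * ∑ j, a j * Real.exp (μ j * s) := by
      refine mul_nonneg (Real.exp_pos _).le (Finset.sum_nonneg fun j _ =>
        mul_nonneg (ha j) (Real.exp_pos _).le)
    have hbE : (∑ j, b k j) * E ≤ 1 := by linarith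
    have hb1k : k - A₂ ≤ k * ∑ j, b k j := by
      have h := mul_le_mul_of_nonneg_left hb1 hk0.le
      have heq : k * (1 - A₂/k) = k - A₂ := by field_simp <;> ring
      linarith [heq ▸ h]
    have hEk : E * (k - A₂) ≤ k := by
      nlinarith [mul_le_mul_of_nonneg_right hb1k hE0.le,
        mul_le_mul_of_nonneg_right hbE hk0.le]
    have hx : k + 2*A₂ ≤ k * Real.exp (2*A₂/k) := by
      have h := mul_le_mul_of_nonneg_left (Real.add_one_le_exp (2*A₂/k)) hk0.le
      have heq : k * (2*A₂/k + 1) = k + 2*A₂ := by field_simp <;> ring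
      linarith [heq ▸ h]
    have hkA : (0:ℝ) < k - A₂ := by linarith
    have hEexp : E ≤ Real.exp (2*A₂/k) := by
      have t1 := mul_le_mul_of_nonneg_right hEk hk0.le
      have t2 : k * k ≤ (k + 2*A₂) * (k - A₂) := by
        nlinarith [mul_nonneg hA₂.le (by linarith : (0:ℝ) ≤ k - 2*A₂)]
      have t3 := mul_le_mul_of_nonneg_right hx hkA.le
      have hq : E * (k * (k - A₂)) ≤ Real.exp (2*A₂/k) * (k * (k - A₂)) := by nlinarith
      exact le_of_mul_le_mul_right hq (by positivity)
    have hlog : 2*δ₁*k*s ≤ 2*A₂/k := Real.exp_le_exp.mp hEexp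
    have hmul : 2*δ₁*k*s*k ≤ 2*A₂ := by
      have h := mul_le_mul_of_nonneg_right hlog hk0.le
      have heq : 2*A₂/k * k = 2*A₂ := by field_simp <;> ring
      linarith [heq ▸ h]
    rw [le_div_iff₀ hk2pos, le_div_iff₀ hδ₁]
    nlinarith
end

section
/- With the notation of the context, assume there is k₁ ≥ 1 such that 1/2 ≤ Σ_{j=1}^{M_k} b_j^{(k)} ≤ 2 for all k ≥ k₁. Then for every C > 0 there exist constants A > 0 and k₀ ≥ k₁ such that for all k ≥ k₀ and all s ∈ ℝ with |s| ≤ C·k^{-1}, the derivative of g_k satisfies g_k'(s) = e^{-2k}·Σ_{j=1}^N a_j·μ_j·e^{μ_j s} + Σ_{j=1}^{M_k} b_j^{(k)}·ν_j^{(k)}·e^{ν_j^{(k)} s} ≥ k/A. -/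
/-!
On `|s| ≤ C/k` every exponent `ν_j^{(k)} s` lies in `[-2δ₂C, 2δ₂C]`, so each factor
`e^{ν_j^{(k)} s}` is at least `e^{-2δ₂C}`, while `ν_j^{(k)} ≥ 2δ₁k`. Hence the second sum of
`g_k'(s)` is at least `(Σ_j b_j^{(k)}) · 2δ₁k · e^{-2δ₂C} ≥ δ₁k · e^{-2δ₂C}`, and the first sum is
nonnegative; so `A = e^{2δ₂C}/δ₁` works.
-/

open Real Finset

theorem hasDerivAt_sum_mul_exp_mul {ι : Type*} [Fintype ι] (c d : ι → ℝ) (s : ℝ) :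
    HasDerivAt (fun t => ∑ i, c i * exp (d i * t)) (∑ i, c i * d i * exp (d i * s)) s :=
  HasDerivAt.fun_sum fun i _ =>
    (((hasDerivAt_id' s).const_mul (d i)).exp.const_mul (c i)).congr_deriv (by ring)

theorem exp_neg_mul_le_exp_mul {x X y r : ℝ} (hx : 0 ≤ x) (hxX : x ≤ X) (hy : |y| ≤ r) :
    exp (-(X * r)) ≤ exp (x * y) := by
  have hr : 0 ≤ r := (abs_nonneg y).trans hy
  have hxy : -(x * r) ≤ x * y := by nlinarith [neg_abs_le y]
  have hxr : x * r ≤ X * r := mul_le_mul_of_nonneg_right hxX hr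
  exact exp_le_exp.2 (by linarith)

theorem sum_mul_mul_exp_neg_le_sum_mul_mul_exp {ι : Type*} [Fintype ι] {b ν : ι → ℝ}
    {lo hi s r : ℝ} (hb : ∀ i, 0 ≤ b i) (hlo : 0 ≤ lo) (hν : ∀ i, ν i ∈ Set.Icc lo hi)
    (hs : |s| ≤ r) :
    (∑ i, b i) * lo * exp (-(hi * r)) ≤ ∑ i, b i * ν i * exp (ν i * s) := by
  rw [sum_mul, sum_mul]
  refine sum_le_sum fun i _ => ?_
  have hνi : 0 ≤ ν i := hlo.trans (hν i).1
  have hexp := exp_neg_mul_le_exp_mul hνi (hν i).2 hs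
  have hbν : b i * lo ≤ b i * ν i := mul_le_mul_of_nonneg_left (hν i).1 (hb i)
  exact mul_le_mul hbν hexp (exp_nonneg _) (mul_nonneg (hb i) hνi)

theorem stmt11_general (δ₁ δ₂ : ℝ) (hδ₁ : 0 < δ₁)
    (N : ℕ) (a : Fin N → ℝ) (ha : ∀ j, 0 ≤ a j)
    (μ : Fin N → ℝ) (hμ : ∀ j, 0 < μ j)
    (M : ℝ → ℕ)
    (b : (k : ℝ) → Fin (M k) → ℝ) (hb : ∀ k : ℝ, 1 ≤ k → ∀ j, 0 ≤ b k j)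
    (ν : (k : ℝ) → Fin (M k) → ℝ)
    (hν : ∀ k : ℝ, 1 ≤ k → ∀ j, ν k j ∈ Set.Icc (2 * δ₁ * k) (2 * δ₂ * k))
    (g : (k : ℝ) → ℝ → ℝ)
    (hg : ∀ k s, g k s = Real.exp (-2 * k) * ∑ j, a j * Real.exp (μ j * s)
        + ∑ j, b k j * Real.exp (ν k j * s))
    (k₁ : ℝ)
    (hsumb : ∀ k ≥ k₁, 1 / 2 ≤ ∑ j, b k j ∧ ∑ j, b k j ≤ 2) :
    ∀ C > (0:ℝ), ∃ A > (0:ℝ), ∃ k₀ ≥ k₁, ∀ k ≥ k₀, ∀ s : ℝ, |s| ≤ C / k →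
      deriv (g k) s = Real.exp (-2 * k) * ∑ j, a j * μ j * Real.exp (μ j * s)
          + ∑ j, b k j * ν k j * Real.exp (ν k j * s) ∧
      k / A ≤ Real.exp (-2 * k) * ∑ j, a j * μ j * Real.exp (μ j * s)
          + ∑ j, b k j * ν k j * Real.exp (ν k j * s) := by
  intro C _
  refine ⟨exp (2 * δ₂ * C) / δ₁, by positivity, max k₁ 1, le_max_left _ _, fun k hk s hs => ?_⟩
  have hk1 : 1 ≤ k := le_of_max_le_right hk
  have hderiv : HasDerivAt (g k) (exp (-2 * k) * ∑ j, a j * μ j * exp (μ j * s)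
      + ∑ j, b k j * ν k j * exp (ν k j * s)) s := by
    rw [funext (hg k)]
    exact ((hasDerivAt_sum_mul_exp_mul a μ s).const_mul _).add
      (hasDerivAt_sum_mul_exp_mul (b k) (ν k) s)
  refine ⟨hderiv.deriv, ?_⟩
  have hfirst : 0 ≤ exp (-2 * k) * ∑ j, a j * μ j * exp (μ j * s) :=
    mul_nonneg (exp_nonneg _) (sum_nonneg fun j _ =>
      mul_nonneg (mul_nonneg (ha j) (hμ j).le) (exp_nonneg _))
  have hsecond := sum_mul_mul_exp_neg_le_sum_mul_mul_exp (hb k hk1) (by positivity) (hν k hk1) hs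
  calc k / (exp (2 * δ₂ * C) / δ₁) = 1 / 2 * (2 * δ₁ * k) * exp (-(2 * δ₂ * k * (C / k))) := by
        rw [exp_neg]
        field_simp
    _ ≤ (∑ j, b k j) * (2 * δ₁ * k) * exp (-(2 * δ₂ * k * (C / k))) := by
        gcongr
        exact (hsumb k (le_of_max_le_left hk)).1
    _ ≤ _ := hsecond.trans (le_add_of_nonneg_left hfirst)

/-- With `g_k(s) = e^{-2k} Σ_j a_j e^{μ_j s} + Σ_j b_j^{(k)} e^{ν_j^{(k)} s}`
as in the context, if `1/2 ≤ Σ_j b_j^{(k)} ≤ 2` for all `k ≥ k₁`, then for every `C > 0`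
there are `A > 0` and `k₀ ≥ k₁` such that for all `k ≥ k₀` and `|s| ≤ C/k` the derivative
of `g_k` equals `e^{-2k} Σ_j a_j μ_j e^{μ_j s} + Σ_j b_j^{(k)} ν_j^{(k)} e^{ν_j^{(k)} s}`
and is at least `k/A`. -/
theorem stmt11 (δ₁ δ₂ : ℝ) (hδ₁ : 0 < δ₁) (hδ : δ₁ < δ₂) (hδ₂ : δ₂ < 1)
    (N : ℕ) (a : Fin N → ℝ) (ha : ∀ j, 0 ≤ a j)
    (μ : Fin N → ℝ) (hμ : ∀ j, 0 < μ j)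
    (M : ℝ → ℕ)
    (b : (k : ℝ) → Fin (M k) → ℝ) (hb : ∀ k : ℝ, 1 ≤ k → ∀ j, 0 ≤ b k j)
    (ν : (k : ℝ) → Fin (M k) → ℝ)
    (hν : ∀ k : ℝ, 1 ≤ k → ∀ j, ν k j ∈ Set.Icc (2 * δ₁ * k) (2 * δ₂ * k))
    (g : (k : ℝ) → ℝ → ℝ)
    (hg : ∀ k s, g k s = Real.exp (-2 * k) * ∑ j, a j * Real.exp (μ j * s)
        + ∑ j, b k j * Real.exp (ν k j * s))
    (k₁ : ℝ) (hk₁ : 1 ≤ k₁)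
    (hsumb : ∀ k ≥ k₁, 1 / 2 ≤ ∑ j, b k j ∧ ∑ j, b k j ≤ 2) :
    ∀ C > (0:ℝ), ∃ A > (0:ℝ), ∃ k₀ ≥ k₁, ∀ k ≥ k₀, ∀ s : ℝ, |s| ≤ C / k →
      deriv (g k) s = Real.exp (-2 * k) * ∑ j, a j * μ j * Real.exp (μ j * s)
          + ∑ j, b k j * ν k j * Real.exp (ν k j * s) ∧
      k / A ≤ Real.exp (-2 * k) * ∑ j, a j * μ j * Real.exp (μ j * s)
          + ∑ j, b k j * ν k j * Real.exp (ν k j * s) :=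
  stmt11_general δ₁ δ₂ hδ₁ N a ha μ hμ M b hb ν hν g hg k₁ hsumb
end
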